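/- arXiv:2304.09679 — 3 statements merged into one kernel-verified Lean document; each statement's English description precedes it below -/
import Mathlib

section
/- For every integer p ≥ 1, every blow-up H of the complete binary tree of depth p (for every choice of the injections μ_s and of the endpoint labelings) has a Hamiltonian path whose two endpoints are the two endpoints of the root edge of H. -/
namespace PaperDefs

/-- `v : Fin n → V` is a path of order `n` in `G`: distinct vertices,
consecutive ones adjacent. -/
def IsPathSeq {V : Type*} (G : SimpleGraph V) {n : ℕ} (v : Fin n → V) : Prop :=
  Function.Injective v ∧ ∀ i j : Fin n, (j : ℕ) = (i : ℕ) + 1 → G.Adj (v i) (v j)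

/-- `v : Fin n → V` is an induced path of order `n` in `G`: a path with no
edge between vertices at distance ≥ 2 along the path. -/
def IsInducedPathSeq {V : Type*} (G : SimpleGraph V) {n : ℕ} (v : Fin n → V) : Prop :=
  IsPathSeq G v ∧ ∀ i j : Fin n, (i : ℕ) + 1 < (j : ℕ) → ¬ G.Adj (v i) (v j)

/-- `G` is `k`-degenerate: every nonempty (induced) subgraph has a vertex of
degree at most `k`. -/
def KDeg {V : Type*} (G : SimpleGraph V) (k : ℕ) : Prop :=
  ∀ s : Set V, s.Nonempty → ∃ v ∈ s, {u | u ∈ s ∧ G.Adj v u}.ncard ≤ k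

/-- `G` has a Hamiltonian path. -/
def HamPath {V : Type*} [Fintype V] (G : SimpleGraph V) : Prop :=
  ∃ v : Fin (Fintype.card V) → V, Function.Bijective v ∧
    ∀ i j : Fin (Fintype.card V), (j : ℕ) = (i : ℕ) + 1 → G.Adj (v i) (v j)

/-- `y` is `r`-reachable from `x` w.r.t. the vertex ordering given by the
injection `f : V → ℕ`. -/
def RReach {V : Type*} (G : SimpleGraph V) (f : V → ℕ) (r : ℕ) (x y : V) : Prop :=
  f y < f x ∧ ∃ w : G.Walk x y, w.IsPath ∧ w.length ≤ r ∧
    ∀ z ∈ w.support, z ≠ x → z ≠ y → f x < f z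

/-- `col_r(G) ≤ k`: some linear order on the vertices witnesses that at most `k`
vertices are `r`-reachable from every vertex. -/
def ColAtMost {V : Type*} (G : SimpleGraph V) (r k : ℕ) : Prop :=
  ∃ f : V → ℕ, Function.Injective f ∧ ∀ x : V, {y | RReach G f r x y}.ncard ≤ k

end PaperDefs
namespace PaperDefs

/-- The function `h` with `h 1 = 3` and `h (ℓ+1) = 2 + 2 * h ℓ`
(equivalently `h ℓ = 5·2^(ℓ-1) - 2` for `ℓ ≥ 1`). -/
def h : ℕ → ℕ
  | 0 => 0
  | 1 => 3
  | n + 2 => 2 + 2 * h (n + 1)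

/-- Shift a set of pairs of integers by `i`. -/
def shift (X : Set (ℕ × ℕ)) (i : ℕ) : Set (ℕ × ℕ) := (fun q => (q.1 + i, q.2 + i)) '' X

/-- The nested interval system `N_ℓ`. -/
def Nset : ℕ → Set (ℕ × ℕ)
  | 0 => ∅
  | 1 => {(1, 3)}
  | ℓ + 2 => {(1, h (ℓ + 2))} ∪ shift (Nset (ℓ + 1)) 1 ∪ shift (Nset (ℓ + 1)) (h (ℓ + 1) + 1)

/-- Nodes of the complete binary tree of depth `p`, heap-indexed by
`1, …, 2^p - 1` (node `i` has children `2i` and `2i+1`). -/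
def isNode (p i : ℕ) : Prop := 1 ≤ i ∧ i < 2 ^ p

/-- Adjacency in the complete binary tree of depth `p` (heap indexing). -/
def treeAdj (p s t : ℕ) : Prop := isNode p s ∧ isNode p t ∧ (s = t / 2 ∨ t = s / 2)

/-- The depth of node `i` (the root `1` has depth `1`). -/
def nodeDepth (i : ℕ) : ℕ := Nat.log 2 i + 1

/-- `s ⪯ t` : `s` is an ancestor of `t` (heap indexing). -/
def anc (s t : ℕ) : Prop := ∃ k, t / 2 ^ k = s

/-- `s ≺ t` : `s` is a strict ancestor of `t` (heap indexing). -/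
def strictAnc (s t : ℕ) : Prop := ∃ k, 1 ≤ k ∧ t / 2 ^ k = s

/-- The nodes of the complete binary tree of depth `p`. -/
abbrev TNode (p : ℕ) := {i : Fin (2 ^ p) // 1 ≤ (i : ℕ)}

/-- The non-root nodes of the complete binary tree of depth `p`. -/
abbrev NRNode (p : ℕ) := {i : Fin (2 ^ p) // 2 ≤ (i : ℕ)}

/-- Vertices of a blow-up of the complete binary tree of depth `p`:
for every node `s` a clique `K^s` on 3 vertices (`Sum.inl (s, i)`),
and for every non-root node `t` the four subdivision vertices
`pred t = {x₁, y₁, x₂, y₂}` (`Sum.inr (t, j)` with `j = 0, 1, 2, 3`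
standing for `x₁, y₁, x₂, y₂`; so `tpred t = {0, 2}` and `bpred t = {1, 3}`). -/
abbrev BV (p : ℕ) := (TNode p × Fin 3) ⊕ (NRNode p × Fin 4)

/-- The projection `π` mapping a vertex of the blow-up to (the heap index of)
the node of the tree it originates from. -/
def πn {p : ℕ} : BV p → ℕ
  | Sum.inl (s, _) => (s.1 : ℕ)
  | Sum.inr (t, _) => (t.1 : ℕ)

/-- The depth of a vertex of the blow-up. -/
def vDepth {p : ℕ} (u : BV p) : ℕ := nodeDepth (πn u)

/-- Edges of the triangle `K^s` (on vertex set `Fin 3`) are identified with the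
vertex they miss; `other k b` enumerates (as `b` ranges over `Bool`) the two
endpoints of the edge `k`. -/
def other (k : Fin 3) (b : Bool) : Fin 3 := k + (if b then 1 else 2)

/-- The arbitrary choices made when constructing a blow-up of the complete binary
tree of depth `p`: the injections `μ_s` from the neighbors of `s` to the edges of
`K^s` (an edge of `K^s` being encoded by the vertex of `Fin 3` it misses), the
choices `ε` of labelings of the endpoints of the edges `μ_s t`, and the top (root)
edge of the root clique, which must be outside the image of `μ` at the root. -/
structure BUChoices (p : ℕ) where
  μ : ℕ → ℕ → Fin 3
  ε : ℕ → ℕ → Bool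
  rootTop : Fin 3
  μ_inj : ∀ s t t', treeAdj p s t → treeAdj p s t' → μ s t = μ s t' → t = t'
  rootTop_spec : ∀ t, treeAdj p 1 t → μ 1 t ≠ rootTop

/-- The (encoding of the) top edge of the clique `K^s`. -/
def topIdx {p : ℕ} (C : BUChoices p) (s : ℕ) : Fin 3 :=
  if s = 1 then C.rootTop else C.μ s (s / 2)

/-- The base relation of the blow-up: clique edges inside each `K^s`, and for every
non-root node `t` with parent `s` the two paths
`L(s,t) = u₁ x₁ y₁ v₁` and `R(s,t) = u₂ x₂ y₂ v₂`, where `u₁, u₂` are the endpoints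
of `μ_s t` and `v₁, v₂` those of `μ_t s` (as labeled by `ε`). -/
def buRel {p : ℕ} (C : BUChoices p) : BV p → BV p → Prop
  | Sum.inl (s, i), Sum.inl (s', j) => s = s' ∧ i ≠ j
  | Sum.inl (s, i), Sum.inr (t, j) =>
      ((s.1 : ℕ) = (t.1 : ℕ) / 2 ∧
        ((j = 0 ∧ i = other (C.μ (s.1 : ℕ) (t.1 : ℕ)) (C.ε (s.1 : ℕ) (t.1 : ℕ))) ∨
         (j = 2 ∧ i = other (C.μ (s.1 : ℕ) (t.1 : ℕ)) (! C.ε (s.1 : ℕ) (t.1 : ℕ))))) ∨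
      ((s.1 : ℕ) = (t.1 : ℕ) ∧
        ((j = 1 ∧ i = other (C.μ (t.1 : ℕ) ((t.1 : ℕ) / 2)) (C.ε (t.1 : ℕ) ((t.1 : ℕ) / 2))) ∨
         (j = 3 ∧ i = other (C.μ (t.1 : ℕ) ((t.1 : ℕ) / 2)) (! C.ε (t.1 : ℕ) ((t.1 : ℕ) / 2)))))
  | Sum.inr (t, j), Sum.inr (t', j') => t = t' ∧ ((j = 0 ∧ j' = 1) ∨ (j = 2 ∧ j' = 3))
  | Sum.inr _, Sum.inl _ => False

/-- The blow-up of the complete binary tree of depth `p`, for the choices `C`. -/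
def blowup {p : ℕ} (C : BUChoices p) : SimpleGraph (BV p) := SimpleGraph.fromRel (buRel C)

/-- A vertex incident with the root edge of the blow-up. -/
def isRootEnd {p : ℕ} (C : BUChoices p) (u : BV p) : Prop :=
  ∃ s x, u = Sum.inl (s, x) ∧ (s.1 : ℕ) = 1 ∧ x ≠ C.rootTop

/-- The arbitrary choices made when constructing `G_ℓ`: those of the underlying
blow-up of `B_ℓ` (the complete binary tree of depth `h ℓ`) together with, for every
pair `s ≺ t`, the labeling `ρ` of the endpoints `u₁, u₂` of the top edge of `K^s`
used for the ribs towards `pred t`. -/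
structure GChoices (ℓ : ℕ) extends BUChoices (h ℓ) where
  ρ : ℕ → ℕ → Bool

/-- The rib edges: for `s ≺ t` with `(depth s, depth t) ∈ N_ℓ`, the edges
`u₁x₁, u₁x₂, u₂y₁, u₂y₂` where `u₁u₂` is the top edge of `K^s`. -/
def ribRel {ℓ : ℕ} (C : GChoices ℓ) : BV (h ℓ) → BV (h ℓ) → Prop
  | Sum.inl (s, i), Sum.inr (t, j) =>
      strictAnc (s.1 : ℕ) (t.1 : ℕ) ∧ (nodeDepth (s.1 : ℕ), nodeDepth (t.1 : ℕ)) ∈ Nset ℓ ∧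
      (((j = 0 ∨ j = 2) ∧ i = other (topIdx C.toBUChoices (s.1 : ℕ)) (C.ρ (s.1 : ℕ) (t.1 : ℕ))) ∨
       ((j = 1 ∨ j = 3) ∧ i = other (topIdx C.toBUChoices (s.1 : ℕ)) (! C.ρ (s.1 : ℕ) (t.1 : ℕ))))
  | _, _ => False

/-- The graph `G_ℓ`: the blow-up `H_ℓ` of `B_ℓ` together with the ribs. -/
def Gl {ℓ : ℕ} (C : GChoices ℓ) : SimpleGraph (BV (h ℓ)) :=
  SimpleGraph.fromRel (fun u v => buRel C.toBUChoices u v ∨ ribRel C u v)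

/-- `s` is a source of `B_ℓ` of rank `a`. -/
def IsSourceOfRank (ℓ s a : ℕ) : Prop :=
  isNode (h ℓ) s ∧ 1 ≤ a ∧ a ≤ ℓ ∧ (nodeDepth s, nodeDepth s + h a - 1) ∈ Nset ℓ

/-- `s` is a source of `B_ℓ`. -/
def IsSource (ℓ s : ℕ) : Prop := isNode (h ℓ) s ∧ ∃ j, (nodeDepth s, j) ∈ Nset ℓ

/-- `t` is an internal node of `B_ℓ(s)`, for `s` a source of rank `a`. -/
def InternalNode (ℓ s a t : ℕ) : Prop :=
  strictAnc s t ∧ nodeDepth t < nodeDepth s + h a - 1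

/-- `t` is a node of the subtree `B_ℓ(s)`, for `s` a source of rank `a`. -/
def SubtreeNode (ℓ s a t : ℕ) : Prop :=
  anc s t ∧ nodeDepth t ≤ nodeDepth s + h a - 1

/-- The set of ranks of sources `s` such that `t` is an internal node of `B_ℓ(s)`. -/
def tauSet (ℓ t : ℕ) : Set ℕ := {a | ∃ s, IsSourceOfRank ℓ s a ∧ InternalNode ℓ s a t}

/-- `τ(u)`: the minimum rank of a source `s` such that `π(u)` is an internal node of
`B_ℓ(s)`, and `ℓ + 1` if there is no such source. -/
noncomputable def tau (ℓ : ℕ) (u : BV (h ℓ)) : ℕ := by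
  classical
  exact if (tauSet ℓ (πn u)).Nonempty then sInf (tauSet ℓ (πn u)) else ℓ + 1

/-- `u` is a vertex incident with the top edge of the clique `K^s`. -/
def TopEdgeVert {ℓ : ℕ} (C : GChoices ℓ) (s : ℕ) (u : BV (h ℓ)) : Prop :=
  ∃ sn x, u = Sum.inl (sn, x) ∧ (sn.1 : ℕ) = s ∧ x ≠ topIdx C.toBUChoices s

/-- `u ∈ pred s`. -/
def InPred {p : ℕ} (s : ℕ) (u : BV p) : Prop := ∃ t j, u = Sum.inr (t, j) ∧ (t.1 : ℕ) = s

/-- `u` and `w` lie in a common clique `K^s`. -/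
def CliquePair {p : ℕ} (u w : BV p) : Prop :=
  ∃ s i j, u = Sum.inl (s, i) ∧ w = Sum.inl (s, j)

/-- `uw` is a tree edge of `G_ℓ`: an edge of the blow-up `H_ℓ` that is not a
clique edge. -/
def IsTreeEdge {ℓ : ℕ} (C : GChoices ℓ) (u w : BV (h ℓ)) : Prop :=
  (blowup C.toBUChoices).Adj u w ∧ ¬ CliquePair u w

/-- The source `s` is `Q`-special for the induced path `Q = v`. -/
def QSpecial {ℓ q : ℕ} (C : GChoices ℓ) (v : Fin q → BV (h ℓ)) (s : ℕ) : Prop :=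
  ∃ a, IsSourceOfRank ℓ s a ∧ (∃ i, TopEdgeVert C s (v i)) ∧
    ∃ j, InternalNode ℓ s a (πn (v j))

end PaperDefs
namespace PaperDefs

section HamAux

variable {p : ℕ} (C : BUChoices p)

private lemma one_lt_two_pow' (hp : 1 ≤ p) : 1 < 2 ^ p := by
  calc 1 < 2 ^ 1 := by norm_num
  _ ≤ 2 ^ p := Nat.pow_le_pow_right (by norm_num) hp

/-- Clique vertex constructor (with junk default). -/
def mkK (hp : 1 ≤ p) (s : ℕ) (i : Fin 3) : BV p :=
  if h : 1 ≤ s ∧ s < 2 ^ p then Sum.inl (⟨⟨s, h.2⟩, h.1⟩, i)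
  else Sum.inl (⟨⟨1, one_lt_two_pow' hp⟩, le_refl 1⟩, i)

/-- Subdivision vertex constructor (with junk default). -/
def mkP (hp : 1 ≤ p) (t : ℕ) (j : Fin 4) : BV p :=
  if h : 2 ≤ t ∧ t < 2 ^ p then Sum.inr (⟨⟨t, h.2⟩, h.1⟩, j)
  else Sum.inl (⟨⟨1, one_lt_two_pow' hp⟩, le_refl 1⟩, 0)

lemma mkK_eq (hp : 1 ≤ p) {s : ℕ} (h1 : 1 ≤ s) (h2 : s < 2 ^ p) (i : Fin 3) :
    mkK hp s i = Sum.inl (⟨⟨s, h2⟩, h1⟩, i) := dif_pos ⟨h1, h2⟩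

lemma mkP_eq (hp : 1 ≤ p) {t : ℕ} (h1 : 2 ≤ t) (h2 : t < 2 ^ p) (j : Fin 4) :
    mkP hp t j = Sum.inr (⟨⟨t, h2⟩, h1⟩, j) := dif_pos ⟨h1, h2⟩

lemma πn_mkK (hp : 1 ≤ p) {s : ℕ} (h1 : 1 ≤ s) (h2 : s < 2 ^ p) (i : Fin 3) :
    πn (mkK hp s i) = s := by rw [mkK_eq hp h1 h2]; rfl

lemma πn_mkP (hp : 1 ≤ p) {t : ℕ} (h1 : 2 ≤ t) (h2 : t < 2 ^ p) (j : Fin 4) :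
    πn (mkP hp t j) = t := by rw [mkP_eq hp h1 h2]; rfl

lemma mkK_ne_inr (hp : 1 ≤ p) (s : ℕ) (i : Fin 3) (y : NRNode p × Fin 4) :
    mkK hp s i ≠ Sum.inr y := by unfold mkK; split <;> simp

/-- Which endpoint of the edge `e` the vertex `a` is. -/
def bIdx (e a : Fin 3) : Bool := decide (a = e + 1)

lemma otherF1 : ∀ e a : Fin 3, a ≠ e → other e (bIdx e a) = a := by decide
lemma otherF2 : ∀ e a c : Fin 3, a ≠ e → c ≠ e → a ≠ c → other e (!(bIdx e a)) = c := by decide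
lemma otherF3 : ∀ (k : Fin 3) (b : Bool), other k b ≠ k := by decide
lemma otherF4 : ∀ (k : Fin 3) (b : Bool), other k b ≠ other k (!b) := by decide
lemma pigeon3 : ∀ a k0 kl kr : Fin 3, a ≠ k0 → a ≠ kl → k0 ≠ kl → k0 ≠ kr → kl ≠ kr → a = kr := by
  decide

/-- The first child visited. -/
def cc1 (s : ℕ) (b : Bool) : ℕ := if other (topIdx C s) b = C.μ s (2 * s) then 2 * s + 1 else 2 * s
/-- The second child visited. -/
def cc2 (s : ℕ) (b : Bool) : ℕ := if other (topIdx C s) b = C.μ s (2 * s) then 2 * s else 2 * s + 1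

/-- The descent into the subtree of the child `t` of `s`, entering the clique
edge `μ s t` at its endpoint labeled `β`. -/
def down (hp : 1 ≤ p) (Pr : ℕ → Bool → List (BV p)) (s t : ℕ) (β : Bool) : List (BV p) :=
  if β = C.ε s t then
    mkP hp t 0 :: mkP hp t 1 :: (Pr t (C.ε t (t / 2)) ++ [mkP hp t 3, mkP hp t 2])
  else
    mkP hp t 2 :: mkP hp t 3 :: (Pr t (!C.ε t (t / 2)) ++ [mkP hp t 1, mkP hp t 0])

/-- The Hamiltonian path of the sub-blow-up rooted at `s`, from the endpoint `b`
of the top edge of `K^s` to the endpoint `!b`.  `n` is the remaining depth. -/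
def PP (hp : 1 ≤ p) : ℕ → ℕ → Bool → List (BV p)
  | 0, s, b => [mkK hp s (other (topIdx C s) b), mkK hp s (topIdx C s),
      mkK hp s (other (topIdx C s) (!b))]
  | n + 1, s, b =>
      mkK hp s (other (topIdx C s) b) ::
        (down C hp (PP hp n) s (cc1 C s b) (bIdx (C.μ s (cc1 C s b)) (other (topIdx C s) b))
          ++ mkK hp s (topIdx C s) ::
            (down C hp (PP hp n) s (cc2 C s b) (bIdx (C.μ s (cc2 C s b)) (topIdx C s))
              ++ [mkK hp s (other (topIdx C s) (!b))]))

lemma head?_PP (hp : 1 ≤ p) (n s : ℕ) (b : Bool) :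
    (PP C hp n s b).head? = some (mkK hp s (other (topIdx C s) b)) := by
  cases n <;> rfl

lemma getLast?_PP (hp : 1 ≤ p) (n s : ℕ) (b : Bool) :
    (PP C hp n s b).getLast? = some (mkK hp s (other (topIdx C s) (!b))) := by
  cases n with
  | zero => rfl
  | succ n =>
      show (_ :: (_ ++ _ :: (_ ++ [_]))).getLast? = _
      rw [show (mkK hp s (other (topIdx C s) b) ::
        (down C hp (PP C hp n) s (cc1 C s b) (bIdx (C.μ s (cc1 C s b)) (other (topIdx C s) b))
          ++ mkK hp s (topIdx C s) ::
            (down C hp (PP C hp n) s (cc2 C s b) (bIdx (C.μ s (cc2 C s b)) (topIdx C s))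
              ++ [mkK hp s (other (topIdx C s) (!b))]))) =
        (mkK hp s (other (topIdx C s) b) ::
        (down C hp (PP C hp n) s (cc1 C s b) (bIdx (C.μ s (cc1 C s b)) (other (topIdx C s) b))
          ++ mkK hp s (topIdx C s) ::
            (down C hp (PP C hp n) s (cc2 C s b) (bIdx (C.μ s (cc2 C s b)) (topIdx C s))))) ++
        [mkK hp s (other (topIdx C s) (!b))] from by simp]
      exact List.getLast?_concat

/-! ### Tree facts -/

lemma mu_lr_ne {s : ℕ} (h1 : 1 ≤ s) (h2 : 2 * s + 1 < 2 ^ p) :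
    C.μ s (2 * s) ≠ C.μ s (2 * s + 1) := by
  intro h
  have := C.μ_inj s (2 * s) (2 * s + 1)
    ⟨⟨h1, by omega⟩, ⟨by omega, by omega⟩, Or.inl (by omega)⟩
    ⟨⟨h1, by omega⟩, ⟨by omega, h2⟩, Or.inl (by omega)⟩ h
  omega

lemma top_ne_mu {s : ℕ} (h1 : 1 ≤ s) (h2 : 2 * s + 1 < 2 ^ p) (t : ℕ)
    (ht : t = 2 * s ∨ t = 2 * s + 1) : topIdx C s ≠ C.μ s t := by
  unfold topIdx
  split
  · rename_i hs1
    subst hs1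
    intro h
    exact C.rootTop_spec t ⟨⟨le_refl 1, by omega⟩, ⟨by omega, by omega⟩, Or.inl (by omega)⟩ h.symm
  · rename_i hs1
    intro h
    have := C.μ_inj s (s / 2) t
      ⟨⟨h1, by omega⟩, ⟨by omega, by omega⟩, Or.inr rfl⟩
      ⟨⟨h1, by omega⟩, ⟨by omega, by omega⟩, Or.inl (by omega)⟩ h
    omega

lemma topIdx_of_ne_one {t : ℕ} (ht : t ≠ 1) : topIdx C t = C.μ t (t / 2) := if_neg ht

lemma cc_facts {s : ℕ} (b : Bool) (h1 : 1 ≤ s) (h2 : 2 * s + 1 < 2 ^ p) :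
    (cc1 C s b = 2 * s ∨ cc1 C s b = 2 * s + 1) ∧
    (cc2 C s b = 2 * s ∨ cc2 C s b = 2 * s + 1) ∧
    cc1 C s b ≠ cc2 C s b ∧
    other (topIdx C s) b ≠ C.μ s (cc1 C s b) ∧
    topIdx C s ≠ C.μ s (cc1 C s b) ∧
    topIdx C s ≠ C.μ s (cc2 C s b) ∧
    other (topIdx C s) (!b) ≠ C.μ s (cc2 C s b) := by
  have hlr := mu_lr_ne C h1 h2
  have htl := top_ne_mu C h1 h2 (2 * s) (Or.inl rfl)
  have htr := top_ne_mu C h1 h2 (2 * s + 1) (Or.inr rfl)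
  unfold cc1 cc2
  split
  · rename_i hif
    refine ⟨Or.inr rfl, Or.inl rfl, by omega, by rw [hif]; exact hlr, htr, htl, ?_⟩
    intro h
    exact otherF4 (topIdx C s) b (hif.trans h.symm)
  · rename_i hif
    have ha : other (topIdx C s) b = C.μ s (2 * s + 1) :=
      pigeon3 _ _ _ _ (otherF3 _ _) hif htl htr hlr
    refine ⟨Or.inl rfl, Or.inr rfl, by omega, hif, htl, htr, ?_⟩
    intro h
    exact otherF4 (topIdx C s) b (ha.trans h.symm)

/-! ### Adjacency lemmas -/

lemma adj_of_rel {u v : BV p} (hne : u ≠ v) (h : buRel C u v ∨ buRel C v u) :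
    (blowup C).Adj u v := (SimpleGraph.fromRel_adj _ u v).mpr ⟨hne, h⟩

lemma bool_eq_not {a b : Bool} (h : ¬ a = b) : a = !b := by
  cases a <;> cases b <;> simp_all

lemma adj_P01 (hp : 1 ≤ p) {t : ℕ} (h1 : 2 ≤ t) (h2 : t < 2 ^ p) :
    (blowup C).Adj (mkP hp t 0) (mkP hp t 1) := by
  rw [mkP_eq hp h1 h2, mkP_eq hp h1 h2]
  exact adj_of_rel C (by simp) (Or.inl ⟨rfl, Or.inl ⟨rfl, rfl⟩⟩)

lemma adj_P23 (hp : 1 ≤ p) {t : ℕ} (h1 : 2 ≤ t) (h2 : t < 2 ^ p) :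
    (blowup C).Adj (mkP hp t 2) (mkP hp t 3) := by
  rw [mkP_eq hp h1 h2, mkP_eq hp h1 h2]
  exact adj_of_rel C (by simp) (Or.inl ⟨rfl, Or.inr ⟨rfl, rfl⟩⟩)

lemma adj_up (hp : 1 ≤ p) {s t : ℕ} (ht2 : 2 ≤ t) (htp : t < 2 ^ p) (hts : t / 2 = s)
    (β : Bool) {i : Fin 3} (hi : i = other (C.μ s t) β) :
    (blowup C).Adj (mkK hp s i) (mkP hp t (if β = C.ε s t then 0 else 2)) := by
  rw [mkK_eq hp (by omega) (by omega), mkP_eq hp ht2 htp]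
  by_cases hβ : β = C.ε s t
  · rw [if_pos hβ]
    refine adj_of_rel C (by simp) (Or.inl (Or.inl ⟨hts.symm, Or.inl ⟨rfl, ?_⟩⟩))
    show i = other (C.μ s t) (C.ε s t)
    rw [hi, hβ]
  · rw [if_neg hβ]
    refine adj_of_rel C (by simp) (Or.inl (Or.inl ⟨hts.symm, Or.inr ⟨rfl, ?_⟩⟩))
    show i = other (C.μ s t) (!C.ε s t)
    rw [hi, bool_eq_not hβ]

lemma adj_exit (hp : 1 ≤ p) {s t : ℕ} (ht2 : 2 ≤ t) (htp : t < 2 ^ p) (hts : t / 2 = s)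
    (β : Bool) {i : Fin 3} (hi : i = other (C.μ s t) (!β)) :
    (blowup C).Adj (mkP hp t (if β = C.ε s t then 2 else 0)) (mkK hp s i) := by
  rw [mkK_eq hp (by omega) (by omega), mkP_eq hp ht2 htp]
  by_cases hβ : β = C.ε s t
  · rw [if_pos hβ]
    refine adj_of_rel C (by simp) (Or.inr (Or.inl ⟨hts.symm, Or.inr ⟨rfl, ?_⟩⟩))
    show i = other (C.μ s t) (!C.ε s t)
    rw [hi, hβ]
  · rw [if_neg hβ]
    refine adj_of_rel C (by simp) (Or.inr (Or.inl ⟨hts.symm, Or.inl ⟨rfl, ?_⟩⟩))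
    show i = other (C.μ s t) (C.ε s t)
    rw [hi, bool_eq_not hβ, Bool.not_not]

lemma adj_in (hp : 1 ≤ p) {t : ℕ} (ht2 : 2 ≤ t) (htp : t < 2 ^ p) :
    (blowup C).Adj (mkP hp t 1) (mkK hp t (other (topIdx C t) (C.ε t (t / 2)))) := by
  rw [mkK_eq hp (by omega) htp, mkP_eq hp ht2 htp]
  refine adj_of_rel C (by simp) (Or.inr (Or.inr ⟨rfl, Or.inl ⟨rfl, ?_⟩⟩))
  show other (topIdx C t) (C.ε t (t / 2)) = other (C.μ t (t / 2)) (C.ε t (t / 2))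
  rw [topIdx_of_ne_one C (by omega : t ≠ 1)]

lemma adj_out (hp : 1 ≤ p) {t : ℕ} (ht2 : 2 ≤ t) (htp : t < 2 ^ p) :
    (blowup C).Adj (mkK hp t (other (topIdx C t) (!C.ε t (t / 2)))) (mkP hp t 3) := by
  rw [mkK_eq hp (by omega) htp, mkP_eq hp ht2 htp]
  refine adj_of_rel C (by simp) (Or.inl (Or.inr ⟨rfl, Or.inr ⟨rfl, ?_⟩⟩))
  show other (topIdx C t) (!C.ε t (t / 2)) = other (C.μ t (t / 2)) (!C.ε t (t / 2))
  rw [topIdx_of_ne_one C (by omega : t ≠ 1)]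

lemma adj_KK (hp : 1 ≤ p) {s : ℕ} (h1 : 1 ≤ s) (h2 : s < 2 ^ p) {i j : Fin 3} (hij : i ≠ j) :
    (blowup C).Adj (mkK hp s i) (mkK hp s j) := by
  rw [mkK_eq hp h1 h2, mkK_eq hp h1 h2]
  refine adj_of_rel C (by simp [hij]) (Or.inl ⟨rfl, hij⟩)

/-! ### head?/getLast? of down -/

lemma head?_down (hp : 1 ≤ p) (Pr : ℕ → Bool → List (BV p)) (s t : ℕ) (β : Bool) :
    (down C hp Pr s t β).head? = some (mkP hp t (if β = C.ε s t then 0 else 2)) := by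
  unfold down
  split
  · rfl
  · rfl

lemma getLast?_cch {α : Type*} (a b c d : α) (l : List α) :
    (a :: b :: (l ++ [c, d])).getLast? = some d := by
  rw [show a :: b :: (l ++ [c, d]) = (a :: b :: (l ++ [c])) ++ [d] by simp]
  exact List.getLast?_concat

lemma getLast?_down (hp : 1 ≤ p) (Pr : ℕ → Bool → List (BV p)) (s t : ℕ) (β : Bool) :
    (down C hp Pr s t β).getLast? = some (mkP hp t (if β = C.ε s t then 2 else 0)) := by
  unfold down
  split
  · exact getLast?_cch _ _ _ _ _
  · exact getLast?_cch _ _ _ _ _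

/-! ### Chain -/

lemma head?_PP_append (hp : 1 ≤ p) (n t : ℕ) (b' : Bool) (l : List (BV p)) :
    (PP C hp n t b' ++ l).head? = some (mkK hp t (other (topIdx C t) b')) := by
  cases n <;> rfl

lemma head?_down_append (hp : 1 ≤ p) (Pr : ℕ → Bool → List (BV p)) (s t : ℕ) (β : Bool)
    (l : List (BV p)) :
    (down C hp Pr s t β ++ l).head? = some (mkP hp t (if β = C.ε s t then 0 else 2)) := by
  unfold down
  split <;> rfl

lemma chain_down (hp : 1 ≤ p) (n s t : ℕ) (β : Bool) (ht2 : 2 ≤ t) (htp : t < 2 ^ p)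
    (ih : ∀ b', List.Chain' (blowup C).Adj (PP C hp n t b')) :
    List.Chain' (blowup C).Adj (down C hp (PP C hp n) s t β) := by
  unfold down
  split
  · refine List.IsChain.append (l₁ := [mkP hp t 0, mkP hp t 1])
      (List.isChain_pair.mpr (adj_P01 C hp ht2 htp)) ?_ ?_
    · refine List.IsChain.append (ih _) (List.isChain_pair.mpr (adj_P23 C hp ht2 htp).symm) ?_
      intro x hx y hy
      rw [Option.mem_def] at hx hy
      obtain rfl := Option.some_inj.mp ((getLast?_PP C hp n t _).symm.trans hx)
      obtain rfl := Option.some_inj.mp ((rfl :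
        ([mkP hp t 3, mkP hp t 2] : List (BV p)).head? = some (mkP hp t 3)).symm.trans hy)
      exact adj_out C hp ht2 htp
    · intro x hx y hy
      rw [Option.mem_def] at hx hy
      obtain rfl := Option.some_inj.mp ((rfl :
        ([mkP hp t 0, mkP hp t 1] : List (BV p)).getLast? = some (mkP hp t 1)).symm.trans hx)
      obtain rfl := Option.some_inj.mp ((head?_PP_append C hp n t _ _).symm.trans hy)
      exact adj_in C hp ht2 htp
  · refine List.IsChain.append (l₁ := [mkP hp t 2, mkP hp t 3])
      (List.isChain_pair.mpr (adj_P23 C hp ht2 htp)) ?_ ?_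
    · refine List.IsChain.append (ih _) (List.isChain_pair.mpr (adj_P01 C hp ht2 htp).symm) ?_
      intro x hx y hy
      rw [Option.mem_def] at hx hy
      obtain rfl := Option.some_inj.mp ((getLast?_PP C hp n t _).symm.trans hx)
      obtain rfl := Option.some_inj.mp ((rfl :
        ([mkP hp t 1, mkP hp t 0] : List (BV p)).head? = some (mkP hp t 1)).symm.trans hy)
      have h := (adj_in C hp ht2 htp).symm
      rw [Bool.not_not]
      exact h
    · intro x hx y hy
      rw [Option.mem_def] at hx hy
      obtain rfl := Option.some_inj.mp ((rfl :
        ([mkP hp t 2, mkP hp t 3] : List (BV p)).getLast? = some (mkP hp t 3)).symm.trans hx)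
      obtain rfl := Option.some_inj.mp ((head?_PP_append C hp n t _ _).symm.trans hy)
      exact (adj_out C hp ht2 htp).symm

lemma PP_succ_eq (hp : 1 ≤ p) (n s : ℕ) (b : Bool) :
    PP C hp (n + 1) s b =
      [mkK hp s (other (topIdx C s) b)] ++
      (down C hp (PP C hp n) s (cc1 C s b) (bIdx (C.μ s (cc1 C s b)) (other (topIdx C s) b)) ++
        ([mkK hp s (topIdx C s)] ++
          (down C hp (PP C hp n) s (cc2 C s b) (bIdx (C.μ s (cc2 C s b)) (topIdx C s)) ++
            [mkK hp s (other (topIdx C s) (!b))]))) := rfl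

lemma chain_PP (hp : 1 ≤ p) :
    ∀ n s b, 1 ≤ s → (s + 1) * 2 ^ n ≤ 2 ^ p →
      List.Chain' (blowup C).Adj (PP C hp n s b) := by
  intro n
  induction n with
  | zero =>
      intro s b h1 h2
      have hs : s < 2 ^ p := by
        have : (1 : ℕ) ≤ 2 ^ 0 := le_refl 1
        omega
      show List.Chain' _ [_, _, _]
      refine List.isChain_cons_cons.mpr ⟨adj_KK C hp h1 hs (otherF3 _ _), ?_⟩
      exact List.isChain_pair.mpr (adj_KK C hp h1 hs (otherF3 _ _).symm)
  | succ n ih =>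
      intro s b h1 h2
      have hpow : 1 ≤ 2 ^ n := Nat.one_le_two_pow
      have h2' : (2 * s + 1 + 1) * 2 ^ n ≤ 2 ^ p := by
        rw [show (2 * s + 1 + 1) * 2 ^ n = (s + 1) * 2 ^ (n + 1) by rw [pow_succ]; ring]
        exact h2
      have hA : 2 * s + 2 ≤ (2 * s + 1 + 1) * 2 ^ n := by nlinarith
      have h2s : 2 * s + 1 < 2 ^ p := by omega
      obtain ⟨hc1, hc2, hcc, hne1, hnet1, hnet2, hne2⟩ := cc_facts C b h1 h2s
      have hv1 : 2 ≤ cc1 C s b ∧ cc1 C s b < 2 ^ p ∧ cc1 C s b / 2 = s := by omega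
      have hv2 : 2 ≤ cc2 C s b ∧ cc2 C s b < 2 ^ p ∧ cc2 C s b / 2 = s := by omega
      have ihc1 : ∀ b', List.Chain' (blowup C).Adj (PP C hp n (cc1 C s b) b') :=
        fun b' => ih _ b' (by omega) (le_trans (Nat.mul_le_mul_right _ (by omega)) h2')
      have ihc2 : ∀ b', List.Chain' (blowup C).Adj (PP C hp n (cc2 C s b) b') :=
        fun b' => ih _ b' (by omega) (le_trans (Nat.mul_le_mul_right _ (by omega)) h2')
      rw [PP_succ_eq]
      refine List.IsChain.append (List.isChain_singleton _) ?_ ?_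
      · refine List.IsChain.append (chain_down C hp n s _ _ hv1.1 hv1.2.1 ihc1) ?_ ?_
        · refine List.IsChain.append (List.isChain_singleton _) ?_ ?_
          · refine List.IsChain.append (chain_down C hp n s _ _ hv2.1 hv2.2.1 ihc2)
              (List.isChain_singleton _) ?_
            -- J4 : last D2 ~ A'
            intro x hx y hy
            rw [Option.mem_def] at hx hy
            obtain rfl := Option.some_inj.mp ((getLast?_down C hp _ _ _ _).symm.trans hx)
            obtain rfl := Option.some_inj.mp ((rfl :
              ([mkK hp s (other (topIdx C s) (!b))] : List (BV p)).head? = some _).symm.trans hy)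
            exact adj_exit C hp hv2.1 hv2.2.1 hv2.2.2 _
              (otherF2 _ _ _ hnet2 hne2 (otherF3 (topIdx C s) (!b)).symm).symm
          · -- J3 : K ~ head D2
            intro x hx y hy
            rw [Option.mem_def] at hx hy
            obtain rfl := Option.some_inj.mp ((rfl :
              ([mkK hp s (topIdx C s)] : List (BV p)).getLast? = some _).symm.trans hx)
            obtain rfl := Option.some_inj.mp ((head?_down_append C hp _ _ _ _ _).symm.trans hy)
            exact adj_up C hp hv2.1 hv2.2.1 hv2.2.2 _ (otherF1 _ _ hnet2).symm
        · -- J2 : last D1 ~ K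
          intro x hx y hy
          rw [Option.mem_def] at hx hy
          obtain rfl := Option.some_inj.mp ((getLast?_down C hp _ _ _ _).symm.trans hx)
          obtain rfl := Option.some_inj.mp ((rfl :
            (([mkK hp s (topIdx C s)] ++ _) : List (BV p)).head? = some _).symm.trans hy)
          exact adj_exit C hp hv1.1 hv1.2.1 hv1.2.2 _
            (otherF2 _ _ _ hne1 hnet1 (otherF3 (topIdx C s) b)).symm
      · -- J1 : A ~ head D1
        intro x hx y hy
        rw [Option.mem_def] at hx hy
        obtain rfl := Option.some_inj.mp ((rfl :
          ([mkK hp s (other (topIdx C s) b)] : List (BV p)).getLast? = some _).symm.trans hx)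
        obtain rfl := Option.some_inj.mp ((head?_down_append C hp _ _ _ _ _).symm.trans hy)
        exact adj_up C hp hv1.1 hv1.2.1 hv1.2.2 _ (otherF1 _ _ hne1).symm

/-! ### Membership -/

lemma PP_zero_eq (hp : 1 ≤ p) (s : ℕ) (b : Bool) :
    PP C hp 0 s b = [mkK hp s (other (topIdx C s) b), mkK hp s (topIdx C s),
      mkK hp s (other (topIdx C s) (!b))] := rfl

lemma mem_down {hp : 1 ≤ p} {Pr : ℕ → Bool → List (BV p)} {s t : ℕ} {β : Bool} {u : BV p}
    (hu : u ∈ down C hp Pr s t β) :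
    (∃ j, u = mkP hp t j) ∨ (∃ b', u ∈ Pr t b') := by
  unfold down at hu
  split at hu <;> simp only [List.mem_cons, List.mem_append, List.mem_singleton,
      List.not_mem_nil, or_false] at hu <;>
    rcases hu with h | h | h | h | h <;>
    first
      | exact Or.inl ⟨_, h⟩
      | exact Or.inr ⟨_, h⟩

lemma subtree_step {s t x : ℕ} (hts : t / 2 = s) (h : ∃ k, x / 2 ^ k = t) :
    ∃ k, x / 2 ^ k = s := by
  obtain ⟨k, hk⟩ := h
  exact ⟨k + 1, by rw [pow_succ, ← Nat.div_div_eq_div_mul, hk, hts]⟩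

lemma mem_PP_anc (hp : 1 ≤ p) :
    ∀ n s b, 1 ≤ s → (s + 1) * 2 ^ n ≤ 2 ^ p →
      ∀ u ∈ PP C hp n s b, ∃ k, πn u / 2 ^ k = s := by
  intro n
  induction n with
  | zero =>
      intro s b h1 h2 u hu
      have hs : s < 2 ^ p := by
        have : (1 : ℕ) ≤ 2 ^ 0 := le_refl 1
        omega
      rw [PP_zero_eq] at hu
      simp only [List.mem_cons, List.mem_singleton, List.not_mem_nil, or_false] at hu
      rcases hu with h | h | h <;>
        · subst h
          exact ⟨0, by rw [πn_mkK hp h1 hs]; simp⟩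
  | succ n ih =>
      intro s b h1 h2 u hu
      have hpow : 1 ≤ 2 ^ n := Nat.one_le_two_pow
      have h2' : (2 * s + 1 + 1) * 2 ^ n ≤ 2 ^ p := by
        rw [show (2 * s + 1 + 1) * 2 ^ n = (s + 1) * 2 ^ (n + 1) by rw [pow_succ]; ring]
        exact h2
      have hA : 2 * s + 2 ≤ (2 * s + 1 + 1) * 2 ^ n := by nlinarith
      have h2s : 2 * s + 1 < 2 ^ p := by omega
      have hs : s < 2 ^ p := by omega
      have hc1 : cc1 C s b = 2 * s ∨ cc1 C s b = 2 * s + 1 := by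
        unfold cc1; split <;> omega
      have hc2 : cc2 C s b = 2 * s ∨ cc2 C s b = 2 * s + 1 := by
        unfold cc2; split <;> omega
      have key : ∀ c : ℕ, (c = 2 * s ∨ c = 2 * s + 1) →
          ∀ β, u ∈ down C hp (PP C hp n) s c β → ∃ k, πn u / 2 ^ k = s := by
        intro c hc β hmem
        rcases mem_down C hmem with ⟨j, hj⟩ | ⟨b', hb'⟩
        · subst hj
          refine ⟨1, ?_⟩
          rw [πn_mkP hp (by omega) (by omega)]
          omega
        · refine subtree_step (show c / 2 = s by omega) ?_
          exact ih c b' (by omega) (le_trans (Nat.mul_le_mul_right _ (by omega)) h2') u hb'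
      rw [PP_succ_eq] at hu
      simp only [List.mem_append, List.mem_singleton, List.not_mem_nil, or_false] at hu
      rcases hu with h | h | h | h | h
      · subst h; exact ⟨0, by rw [πn_mkK hp h1 hs]; simp⟩
      · exact key _ hc1 _ h
      · subst h; exact ⟨0, by rw [πn_mkK hp h1 hs]; simp⟩
      · exact key _ hc2 _ h
      · subst h; exact ⟨0, by rw [πn_mkK hp h1 hs]; simp⟩

lemma mem_PP_inr (hp : 1 ≤ p) :
    ∀ n s b, 1 ≤ s → (s + 1) * 2 ^ n ≤ 2 ^ p →
      ∀ u ∈ PP C hp n s b, ∀ (tt : NRNode p) (j : Fin 4), u = Sum.inr (tt, j) →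
        s < (tt.1 : ℕ) := by
  intro n
  induction n with
  | zero =>
      intro s b h1 h2 u hu tt j hj
      rw [PP_zero_eq] at hu
      simp only [List.mem_cons, List.mem_singleton, List.not_mem_nil, or_false] at hu
      rcases hu with h | h | h <;>
        · subst h
          exact absurd hj (mkK_ne_inr hp _ _ _)
  | succ n ih =>
      intro s b h1 h2 u hu tt j hj
      have hpow : 1 ≤ 2 ^ n := Nat.one_le_two_pow
      have h2' : (2 * s + 1 + 1) * 2 ^ n ≤ 2 ^ p := by
        rw [show (2 * s + 1 + 1) * 2 ^ n = (s + 1) * 2 ^ (n + 1) by rw [pow_succ]; ring]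
        exact h2
      have hA : 2 * s + 2 ≤ (2 * s + 1 + 1) * 2 ^ n := by nlinarith
      have h2s : 2 * s + 1 < 2 ^ p := by omega
      have hc1 : cc1 C s b = 2 * s ∨ cc1 C s b = 2 * s + 1 := by
        unfold cc1; split <;> omega
      have hc2 : cc2 C s b = 2 * s ∨ cc2 C s b = 2 * s + 1 := by
        unfold cc2; split <;> omega
      have key : ∀ c : ℕ, (c = 2 * s ∨ c = 2 * s + 1) →
          ∀ β, u ∈ down C hp (PP C hp n) s c β → s < (tt.1 : ℕ) := by
        intro c hc β hmem
        rcases mem_down C hmem with ⟨j', hj'⟩ | ⟨b', hb'⟩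
        · have hcc : Sum.inr (tt, j) = mkP hp c j' := hj.symm.trans hj'
          rw [mkP_eq hp (by omega : 2 ≤ c) (by omega : c < 2 ^ p)] at hcc
          simp only [Sum.inr.injEq, Prod.mk.injEq] at hcc
          obtain ⟨h_tt, -⟩ := hcc
          rw [h_tt]
          simpa using (by omega : s < c)
        · have := ih c b' (by omega)
            (le_trans (Nat.mul_le_mul_right _ (by omega)) h2') u hb' tt j hj
          omega
      rw [PP_succ_eq] at hu
      simp only [List.mem_append, List.mem_singleton, List.not_mem_nil, or_false] at hu
      rcases hu with h | h | h | h | h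
      · subst h; exact absurd hj (mkK_ne_inr hp _ _ _)
      · exact key _ hc1 _ h
      · subst h; exact absurd hj (mkK_ne_inr hp _ _ _)
      · exact key _ hc2 _ h
      · subst h; exact absurd hj (mkK_ne_inr hp _ _ _)

lemma mem_down_anc (hp : 1 ≤ p) {n s t : ℕ} {β : Bool} (ht2 : 2 ≤ t) (htp : t < 2 ^ p)
    (hok : (t + 1) * 2 ^ n ≤ 2 ^ p) :
    ∀ u ∈ down C hp (PP C hp n) s t β, ∃ k, πn u / 2 ^ k = t := by
  intro u hu
  rcases mem_down C hu with ⟨j, hj⟩ | ⟨b', hb'⟩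
  · subst hj
    exact ⟨0, by rw [πn_mkP hp ht2 htp]; simp⟩
  · exact mem_PP_anc C hp n t b' (by omega) hok u hb'

lemma mkK_not_mem_down (hp : 1 ≤ p) {n s s' t : ℕ} {β : Bool} {i : Fin 3}
    (h1 : 1 ≤ s') (h2 : s' < 2 ^ p) (hst : s' < t) (ht2 : 2 ≤ t) (htp : t < 2 ^ p)
    (hok : (t + 1) * 2 ^ n ≤ 2 ^ p) :
    mkK hp s' i ∉ down C hp (PP C hp n) s t β := by
  intro h
  obtain ⟨k, hk⟩ := mem_down_anc C hp ht2 htp hok _ h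
  rw [πn_mkK hp h1 h2] at hk
  have := Nat.div_le_self s' (2 ^ k)
  omega

lemma anc_aux {x c c' k k' : ℕ} (h : k ≤ k') (hk : x / 2 ^ k = c) (hk' : x / 2 ^ k' = c') :
    c / 2 ^ (k' - k) = c' := by
  rw [← hk, Nat.div_div_eq_div_mul, ← pow_add, ← hk']
  congr 2
  omega

lemma sibling_disj {x s c c' : ℕ} (h1 : 1 ≤ s) (hc : c = 2 * s ∨ c = 2 * s + 1)
    (hc' : c' = 2 * s ∨ c' = 2 * s + 1) (hne : c ≠ c')
    (h : ∃ k, x / 2 ^ k = c) (h' : ∃ k, x / 2 ^ k = c') : False := by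
  obtain ⟨k, hk⟩ := h
  obtain ⟨k', hk'⟩ := h'
  have key : ∀ a b m : ℕ, (a = 2 * s ∨ a = 2 * s + 1) → (b = 2 * s ∨ b = 2 * s + 1) →
      a ≠ b → a / 2 ^ m = b → False := by
    intro a b m ha hb hab hm
    rcases Nat.eq_zero_or_pos m with hm0 | hm0
    · subst hm0; simp at hm; omega
    · have : a / 2 ^ m ≤ a / 2 := Nat.div_le_div_left (by
        calc 2 = 2 ^ 1 := rfl
        _ ≤ 2 ^ m := Nat.pow_le_pow_right (by norm_num) hm0) (by norm_num)
      have ha2 : a / 2 = s := by omega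
      omega
  rcases Nat.le_total k k' with hkk | hkk
  · exact key c c' (k' - k) hc hc' hne (anc_aux hkk hk hk')
  · exact key c' c (k - k') hc' hc (Ne.symm hne) (anc_aux hkk hk' hk)

/-! ### Nodup -/

lemma mkP_not_mem_PP (hp : 1 ≤ p) {n t : ℕ} (ht2 : 2 ≤ t) (htp : t < 2 ^ p)
    (hok : (t + 1) * 2 ^ n ≤ 2 ^ p) (j : Fin 4) (b' : Bool) :
    mkP hp t j ∉ PP C hp n t b' := by
  intro h
  have := mem_PP_inr C hp n t b' (by omega) hok _ h ⟨⟨t, htp⟩, ht2⟩ j (mkP_eq hp ht2 htp j)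
  simp at this

lemma mkP_ne_mkP (hp : 1 ≤ p) {t : ℕ} (ht2 : 2 ≤ t) (htp : t < 2 ^ p) {j j' : Fin 4}
    (hjj : j ≠ j') : mkP hp t j ≠ mkP hp t j' := by
  rw [mkP_eq hp ht2 htp, mkP_eq hp ht2 htp]
  simp [hjj]

lemma mkK_ne_mkK (hp : 1 ≤ p) {s : ℕ} (h1 : 1 ≤ s) (h2 : s < 2 ^ p) {i j : Fin 3}
    (hij : i ≠ j) : mkK hp s i ≠ mkK hp s j := by
  rw [mkK_eq hp h1 h2, mkK_eq hp h1 h2]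
  simp [hij]

lemma nodup_down (hp : 1 ≤ p) {n s t : ℕ} {β : Bool} (ht2 : 2 ≤ t) (htp : t < 2 ^ p)
    (hok : (t + 1) * 2 ^ n ≤ 2 ^ p)
    (ihn : ∀ b', (PP C hp n t b').Nodup) :
    (down C hp (PP C hp n) s t β).Nodup := by
  have hnm := mkP_not_mem_PP C hp ht2 htp hok
  have hne : ∀ (j j' : Fin 4), j ≠ j' → mkP hp t j ≠ mkP hp t j' :=
    fun j j' h => mkP_ne_mkP hp ht2 htp h
  unfold down
  split <;>
  · refine List.nodup_cons.mpr ⟨fun hmem => ?_, List.nodup_cons.mpr ⟨fun hmem => ?_, ?_⟩⟩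
    · simp at hmem
      rcases hmem with h | h | h | h
      · exact hne _ _ (by decide) h
      · exact hnm _ _ h
      · exact hne _ _ (by decide) h
      · exact hne _ _ (by decide) h
    · simp at hmem
      rcases hmem with h | h | h
      · exact hnm _ _ h
      · exact hne _ _ (by decide) h
      · exact hne _ _ (by decide) h
    · refine List.nodup_append.mpr ⟨ihn _, ?_, ?_⟩
      · refine List.nodup_cons.mpr ⟨fun hmem => ?_, List.nodup_singleton _⟩
        simp at hmem
        exact hne _ _ (by decide) hmem
      · intro u hu w hmem huw
        subst huw
        simp at hmem
        rcases hmem with h | h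
        · subst h; exact hnm _ _ hu
        · subst h; exact hnm _ _ hu

lemma nodup_PP (hp : 1 ≤ p) :
    ∀ n s b, 1 ≤ s → (s + 1) * 2 ^ n ≤ 2 ^ p → (PP C hp n s b).Nodup := by
  intro n
  induction n with
  | zero =>
      intro s b h1 h2
      have hs : s < 2 ^ p := by
        have : (1 : ℕ) ≤ 2 ^ 0 := le_refl 1
        omega
      have d1 : mkK hp s (other (topIdx C s) b) ≠ mkK hp s (topIdx C s) :=
        mkK_ne_mkK hp h1 hs (otherF3 _ _)
      have d2 : mkK hp s (other (topIdx C s) b) ≠ mkK hp s (other (topIdx C s) (!b)) :=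
        mkK_ne_mkK hp h1 hs (otherF4 _ _)
      have d3 : mkK hp s (topIdx C s) ≠ mkK hp s (other (topIdx C s) (!b)) :=
        mkK_ne_mkK hp h1 hs (otherF3 _ _).symm
      show List.Nodup [_, _, _]
      simp [d1, d2, d3]
  | succ n ih =>
      intro s b h1 h2
      have hpow : 1 ≤ 2 ^ n := Nat.one_le_two_pow
      have h2' : (2 * s + 1 + 1) * 2 ^ n ≤ 2 ^ p := by
        rw [show (2 * s + 1 + 1) * 2 ^ n = (s + 1) * 2 ^ (n + 1) by rw [pow_succ]; ring]
        exact h2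
      have hA : 2 * s + 2 ≤ (2 * s + 1 + 1) * 2 ^ n := by nlinarith
      have h2s : 2 * s + 1 < 2 ^ p := by omega
      have hs : s < 2 ^ p := by omega
      have hc1 : cc1 C s b = 2 * s ∨ cc1 C s b = 2 * s + 1 := by
        unfold cc1; split <;> omega
      have hc2 : cc2 C s b = 2 * s ∨ cc2 C s b = 2 * s + 1 := by
        unfold cc2; split <;> omega
      have hcc : cc1 C s b ≠ cc2 C s b := by
        unfold cc1 cc2; split <;> omega
      have hv1 : 2 ≤ cc1 C s b ∧ cc1 C s b < 2 ^ p := by omega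
      have hv2 : 2 ≤ cc2 C s b ∧ cc2 C s b < 2 ^ p := by omega
      have hok1 : (cc1 C s b + 1) * 2 ^ n ≤ 2 ^ p :=
        le_trans (Nat.mul_le_mul_right _ (by omega)) h2'
      have hok2 : (cc2 C s b + 1) * 2 ^ n ≤ 2 ^ p :=
        le_trans (Nat.mul_le_mul_right _ (by omega)) h2'
      have ihc1 : ∀ b', (PP C hp n (cc1 C s b) b').Nodup := fun b' => ih _ b' (by omega) hok1
      have ihc2 : ∀ b', (PP C hp n (cc2 C s b) b').Nodup := fun b' => ih _ b' (by omega) hok2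
      have hKd1 : ∀ i : Fin 3, mkK hp s i ∉
          down C hp (PP C hp n) s (cc1 C s b) (bIdx (C.μ s (cc1 C s b)) (other (topIdx C s) b)) :=
        fun i => mkK_not_mem_down C hp h1 hs (by omega) hv1.1 hv1.2 hok1
      have hKd2 : ∀ i : Fin 3, mkK hp s i ∉
          down C hp (PP C hp n) s (cc2 C s b) (bIdx (C.μ s (cc2 C s b)) (topIdx C s)) :=
        fun i => mkK_not_mem_down C hp h1 hs (by omega) hv2.1 hv2.2 hok2
      have hd12 : ∀ u, u ∈ down C hp (PP C hp n) s (cc1 C s b)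
            (bIdx (C.μ s (cc1 C s b)) (other (topIdx C s) b)) →
          u ∉ down C hp (PP C hp n) s (cc2 C s b) (bIdx (C.μ s (cc2 C s b)) (topIdx C s)) := by
        intro u hu1 hu2
        exact sibling_disj h1 hc1 hc2 hcc
          (mem_down_anc C hp hv1.1 hv1.2 hok1 u hu1)
          (mem_down_anc C hp hv2.1 hv2.2 hok2 u hu2)
      rw [PP_succ_eq]
      refine List.nodup_append.mpr ⟨by simp, ?_, ?_⟩
      · refine List.nodup_append.mpr
          ⟨nodup_down C hp hv1.1 hv1.2 hok1 ihc1, ?_, ?_⟩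
        · refine List.nodup_append.mpr ⟨by simp, ?_, ?_⟩
          · refine List.nodup_append.mpr
              ⟨nodup_down C hp hv2.1 hv2.2 hok2 ihc2, by simp, ?_⟩
            intro u hu w hmem huw
            subst huw
            simp only [List.mem_singleton] at hmem
            subst hmem
            exact hKd2 _ hu
          · intro u hu w hmem huw
            subst huw
            simp only [List.mem_singleton] at hu
            subst hu
            simp only [List.mem_append, List.mem_singleton] at hmem
            rcases hmem with h | h
            · exact hKd2 _ h
            · exact mkK_ne_mkK hp h1 hs (otherF3 _ _).symm h
        · intro u hu w hmem huw
          subst huw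
          simp only [List.mem_append, List.mem_singleton] at hmem
          rcases hmem with h | h | h
          · subst h; exact hKd1 _ hu
          · exact hd12 u hu h
          · subst h; exact hKd1 _ hu
      · intro u hu w hmem huw
        subst huw
        simp only [List.mem_singleton] at hu
        subst hu
        simp only [List.mem_append, List.mem_singleton] at hmem
        rcases hmem with h | h | h | h
        · exact hKd1 _ h
        · exact mkK_ne_mkK hp h1 hs (otherF3 _ _) h
        · exact hKd2 _ h
        · exact mkK_ne_mkK hp h1 hs (otherF4 _ _) h

/-! ### Length -/

lemma length_PP (hp : 1 ≤ p) :
    ∀ n s b, (PP C hp n s b).length = 7 * 2 ^ (n + 1) - 11 := by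
  intro n
  induction n with
  | zero => intro s b; show List.length [_, _, _] = _; norm_num
  | succ n ih =>
      intro s b
      have hd : ∀ t β, (down C hp (PP C hp n) s t β).length = (7 * 2 ^ (n + 1) - 11) + 4 := by
        intro t β
        unfold down
        split <;> simp [ih t] <;> omega
      rw [PP_succ_eq]
      simp only [List.length_append, List.length_singleton, hd]
      have hpow : 2 ≤ 2 ^ (n + 1) := by
        calc 2 = 2 ^ 1 := rfl
        _ ≤ 2 ^ (n + 1) := Nat.pow_le_pow_right (by norm_num) (by omega)
      rw [show n + 1 + 1 = (n + 1) + 1 from rfl, pow_succ]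
      omega

/-! ### Cardinality -/

def cardEquiv (N k : ℕ) : {i : Fin N // k ≤ (i : ℕ)} ≃ Fin (N - k) where
  toFun x := ⟨(x.1 : ℕ) - k, by have := x.1.isLt; have := x.2; omega⟩
  invFun j := ⟨⟨(j : ℕ) + k, by have := j.isLt; omega⟩, Nat.le_add_left k _⟩
  left_inv x := Subtype.ext (Fin.ext (by have := x.2; simp; omega))
  right_inv j := Fin.ext (by simp)

lemma card_BV (hp : 1 ≤ p) : Fintype.card (BV p) = 7 * 2 ^ p - 11 := by
  have h1 : Fintype.card (TNode p) = 2 ^ p - 1 := by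
    rw [Fintype.card_congr (cardEquiv (2 ^ p) 1), Fintype.card_fin]
  have h2 : Fintype.card (NRNode p) = 2 ^ p - 2 := by
    rw [Fintype.card_congr (cardEquiv (2 ^ p) 2), Fintype.card_fin]
  have h3 : 2 ≤ 2 ^ p := by
    calc 2 = 2 ^ 1 := rfl
    _ ≤ 2 ^ p := Nat.pow_le_pow_right (by norm_num) hp
  have hsum : Fintype.card (BV p) = (2 ^ p - 1) * 3 + (2 ^ p - 2) * 4 := by
    rw [Fintype.card_sum, Fintype.card_prod, Fintype.card_prod, h1, h2,
      Fintype.card_fin, Fintype.card_fin]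
  rw [hsum]
  omega

/-! ### Assembly -/

lemma root_end (hp : 1 ≤ p) (b : Bool) :
    isRootEnd C (mkK hp 1 (other (topIdx C 1) b)) := by
  rw [mkK_eq hp le_rfl (one_lt_two_pow' hp)]
  refine ⟨_, _, rfl, rfl, ?_⟩
  rw [show topIdx C 1 = C.rootTop from if_pos rfl]
  exact otherF3 _ _

end HamAux

/-- For every `p ≥ 1`, every blow-up of the complete binary tree of depth `p`
(i.e. for every choice of the injections `μ_s`, of the endpoint labelings and of
the root edge) has a Hamiltonian path whose two endpoints are the two endpoints
of the root edge. -/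
theorem statement5 :
    ∀ p : ℕ, 1 ≤ p → ∀ C : BUChoices p,
      ∃ v : Fin (Fintype.card (BV p)) → BV p,
        Function.Bijective v ∧
        (∀ i j : Fin (Fintype.card (BV p)), (j : ℕ) = (i : ℕ) + 1 →
          (blowup C).Adj (v i) (v j)) ∧
        (∀ i : Fin (Fintype.card (BV p)), (i : ℕ) = 0 → isRootEnd C (v i)) ∧
        (∀ i : Fin (Fintype.card (BV p)), (i : ℕ) = Fintype.card (BV p) - 1 →
          isRootEnd C (v i)) := by
  intro p hp C
  have hok : (1 + 1) * 2 ^ (p - 1) ≤ 2 ^ p := by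
    rw [show (1 + 1) * 2 ^ (p - 1) = 2 ^ (p - 1) * 2 by ring, ← pow_succ,
      show p - 1 + 1 = p by omega]
  have hlen : (PP C hp (p - 1) 1 true).length = Fintype.card (BV p) := by
    rw [length_PP C hp (p - 1) 1 true, card_BV hp, show p - 1 + 1 = p by omega]
  have hnd := nodup_PP C hp (p - 1) 1 true le_rfl hok
  have hch := chain_PP C hp (p - 1) 1 true le_rfl hok
  set L := PP C hp (p - 1) 1 true with hLdef
  have hpos : 0 < L.length := by
    rw [hlen, card_BV hp]
    have : 2 ≤ 2 ^ p := by
      calc 2 = 2 ^ 1 := rfl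
      _ ≤ 2 ^ p := Nat.pow_le_pow_right (by norm_num) hp
    omega
  have hne : L ≠ [] := List.length_pos_iff.mp hpos
  refine ⟨fun i => L.get (Fin.cast hlen.symm i), ?_, ?_, ?_, ?_⟩
  · rw [Fintype.bijective_iff_injective_and_card]
    refine ⟨(List.nodup_iff_injective_get.mp hnd).comp (Fin.cast_injective _), by simp⟩
  · intro i j hij
    have hjlt : (i : ℕ) + 1 < L.length := by
      have := j.isLt; rw [hlen]; omega
    have hc := List.isChain_iff_getElem.mp hch (i : ℕ) (by omega)
    have e1 : Fin.cast hlen.symm i = (⟨(i : ℕ), by omega⟩ : Fin L.length) := Fin.ext rfl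
    have e2 : Fin.cast hlen.symm j = (⟨(i : ℕ) + 1, hjlt⟩ : Fin L.length) := Fin.ext hij
    show (blowup C).Adj (L.get (Fin.cast hlen.symm i)) (L.get (Fin.cast hlen.symm j))
    rw [e1, e2]
    exact hc
  · intro i hi
    have e1 : Fin.cast hlen.symm i = (⟨0, hpos⟩ : Fin L.length) := Fin.ext hi
    show isRootEnd C (L.get (Fin.cast hlen.symm i))
    rw [e1, List.get_mk_zero hpos]
    have h2 : L.head? = some (L.head hne) := List.head?_eq_head hne
    rw [head?_PP C hp (p - 1) 1 true] at h2
    rw [show L.head hne = mkK hp 1 (other (topIdx C 1) true) from (Option.some_inj.mp h2).symm]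
    exact root_end C hp true
  · intro i hi
    have e1 : Fin.cast hlen.symm i = (⟨L.length - 1, by omega⟩ : Fin L.length) := by
      refine Fin.ext ?_
      show (i : ℕ) = L.length - 1
      rw [hi, hlen]
    show isRootEnd C (L.get (Fin.cast hlen.symm i))
    rw [e1, List.get_eq_getElem, ← List.getLast_eq_getElem hne]
    have h2 : L.getLast? = some (L.getLast hne) := List.getLast?_eq_getLast hne
    rw [getLast?_PP C hp (p - 1) 1 true] at h2
    rw [show L.getLast hne = mkK hp 1 (other (topIdx C 1) (!true)) from
      (Option.some_inj.mp h2).symm]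
    exact root_end C hp false

end PaperDefs
end

section
/- For every integer ℓ ≥ 1: (1) every interval (i,j) ∈ N_ℓ satisfies 1 ≤ i < j ≤ h(ℓ); (2) the intervals of N_ℓ all have distinct endpoints, i.e., for distinct intervals (i,j), (i',j') ∈ N_ℓ the four numbers satisfy i ≠ i', i ≠ j', j ≠ i', j ≠ j'; (3) every interval of N_ℓ is of the form (i, i + h(a) − 1) for some i ∈ {1,…,h(ℓ)} and a ∈ {1,…,ℓ}; (4) no two intervals of N_ℓ cross, i.e., there are no intervals (i,j), (i',j') ∈ N_ℓ with i < i' < j < j'. -/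
namespace PaperDefs

lemma h_ge3 : ∀ a : ℕ, 1 ≤ a → 3 ≤ h a := by
  intro a ha
  induction a with
  | zero => omega
  | succ n ih =>
    match n with
    | 0 => simp [h]
    | m + 1 => show 3 ≤ h (m + 2); rw [show h (m+2) = 2 + 2 * h (m+1) from rfl]; omega

lemma mem_shift {X : Set (ℕ × ℕ)} {c i j : ℕ} :
    (i, j) ∈ shift X c ↔ ∃ a b, (a, b) ∈ X ∧ i = a + c ∧ j = b + c := by
  constructor
  · rintro ⟨⟨a, b⟩, hq, heq⟩
    have h1 : a + c = i := congrArg Prod.fst heq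
    have h2 : b + c = j := congrArg Prod.snd heq
    exact ⟨a, b, hq, h1.symm, h2.symm⟩
  · rintro ⟨a, b, hq, rfl, rfl⟩
    exact ⟨(a, b), hq, rfl⟩

lemma mem_Nset_one {i j : ℕ} : (i, j) ∈ Nset 1 ↔ i = 1 ∧ j = 3 := by
  simp [Nset, Prod.ext_iff]

lemma mem_Nset_ss {ℓ i j : ℕ} :
    (i, j) ∈ Nset (ℓ + 2) ↔ (i = 1 ∧ j = h (ℓ + 2)) ∨
      (∃ a b, (a, b) ∈ Nset (ℓ + 1) ∧ i = a + 1 ∧ j = b + 1) ∨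
      (∃ a b, (a, b) ∈ Nset (ℓ + 1) ∧ i = a + (h (ℓ + 1) + 1) ∧ j = b + (h (ℓ + 1) + 1)) := by
  show (i, j) ∈ {(1, h (ℓ + 2))} ∪ shift (Nset (ℓ + 1)) 1 ∪ shift (Nset (ℓ + 1)) (h (ℓ + 1) + 1) ↔ _
  constructor
  · intro hm
    rcases hm with (hm | hm) | hm
    · left; rw [Set.mem_singleton_iff, Prod.ext_iff] at hm; exact hm
    · right; left; exact mem_shift.mp hm
    · right; right; exact mem_shift.mp hm
  · intro hm
    rcases hm with ⟨h1, h2⟩ | hm | hm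
    · left; left; rw [Set.mem_singleton_iff, Prod.ext_iff]; exact ⟨h1, h2⟩
    · left; right; exact mem_shift.mpr hm
    · right; exact mem_shift.mpr hm

def Pprop (ℓ : ℕ) : Prop :=
  (∀ i j : ℕ, (i, j) ∈ Nset ℓ → 1 ≤ i ∧ i < j ∧ j ≤ h ℓ) ∧
  (∀ i j i' j' : ℕ, (i, j) ∈ Nset ℓ → (i', j') ∈ Nset ℓ → (i, j) ≠ (i', j') →
    i ≠ i' ∧ i ≠ j' ∧ j ≠ i' ∧ j ≠ j') ∧
  (∀ i j : ℕ, (i, j) ∈ Nset ℓ →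
    ∃ a : ℕ, 1 ≤ a ∧ a ≤ ℓ ∧ 1 ≤ i ∧ i ≤ h ℓ ∧ j = i + h a - 1) ∧
  (∀ i j i' j' : ℕ, (i, j) ∈ Nset ℓ → (i', j') ∈ Nset ℓ →
    ¬ (i < i' ∧ i' < j ∧ j < j'))

lemma Pkey : ∀ ℓ : ℕ, Pprop (ℓ + 1) := by
  intro ℓ
  induction ℓ with
  | zero =>
    show Pprop 1
    refine ⟨?_, ?_, ?_, ?_⟩
    · intro i j hij
      rw [mem_Nset_one] at hij
      have : h 1 = 3 := rfl
      omega
    · intro i j i' j' h1 h2 hne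
      rw [mem_Nset_one] at h1 h2
      exact absurd (by rw [Prod.mk.injEq]; omega) hne
    · intro i j hij
      rw [mem_Nset_one] at hij
      exact ⟨1, by simp [h]; omega⟩
    · intro i j i' j' h1 h2
      rw [mem_Nset_one] at h1 h2
      omega
  | succ n ih =>
    show Pprop (n + 2)
    obtain ⟨ih1, ih2, ih3, ih4⟩ := ih
    have hH : h (n + 2) = 2 + 2 * h (n + 1) := rfl
    have h3 : 3 ≤ h (n + 1) := h_ge3 (n + 1) (by omega)
    refine ⟨?_, ?_, ?_, ?_⟩
    · intro i j hij
      rw [mem_Nset_ss] at hij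
      rcases hij with ⟨rfl, rfl⟩ | ⟨a, b, hab, rfl, rfl⟩ | ⟨a, b, hab, rfl, rfl⟩
      · omega
      · have := ih1 a b hab; omega
      · have := ih1 a b hab; omega
    · intro i j i' j' hm hm' hne
      rw [mem_Nset_ss] at hm hm'
      rcases hm with ⟨rfl, rfl⟩ | ⟨a, b, hab, rfl, rfl⟩ | ⟨a, b, hab, rfl, rfl⟩ <;>
        rcases hm' with ⟨rfl, rfl⟩ | ⟨a', b', hab', rfl, rfl⟩ | ⟨a', b', hab', rfl, rfl⟩
      · exact absurd rfl hne
      · have := ih1 a' b' hab'; omega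
      · have := ih1 a' b' hab'; omega
      · have := ih1 a b hab; omega
      · have hne' : (a, b) ≠ (a', b') := by
          intro hh; apply hne; rw [Prod.mk.injEq] at hh ⊢; omega
        have := ih2 a b a' b' hab hab' hne'
        omega
      · have := ih1 a b hab; have := ih1 a' b' hab'; omega
      · have := ih1 a b hab; omega
      · have := ih1 a b hab; have := ih1 a' b' hab'; omega
      · have hne' : (a, b) ≠ (a', b') := by
          intro hh; apply hne; rw [Prod.mk.injEq] at hh ⊢; omega
        have := ih2 a b a' b' hab hab' hne'
        omega
    · intro i j hij
      rw [mem_Nset_ss] at hij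
      rcases hij with ⟨rfl, rfl⟩ | ⟨a, b, hab, rfl, rfl⟩ | ⟨a, b, hab, rfl, rfl⟩
      · exact ⟨n + 2, by omega, le_refl _, by omega, by omega, by omega⟩
      · obtain ⟨c, hc1, hc2, hc3, hc4, hc5⟩ := ih3 a b hab
        have := h_ge3 c hc1
        exact ⟨c, hc1, by omega, by omega, by omega, by omega⟩
      · obtain ⟨c, hc1, hc2, hc3, hc4, hc5⟩ := ih3 a b hab
        have := h_ge3 c hc1
        exact ⟨c, hc1, by omega, by omega, by omega, by omega⟩
    · intro i j i' j' hm hm'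
      rw [mem_Nset_ss] at hm hm'
      rcases hm with ⟨rfl, rfl⟩ | ⟨a, b, hab, rfl, rfl⟩ | ⟨a, b, hab, rfl, rfl⟩ <;>
        rcases hm' with ⟨rfl, rfl⟩ | ⟨a', b', hab', rfl, rfl⟩ | ⟨a', b', hab', rfl, rfl⟩
      · omega
      · have := ih1 a' b' hab'; omega
      · have := ih1 a' b' hab'; omega
      · have := ih1 a b hab; omega
      · have := ih4 a b a' b' hab hab'; omega
      · have := ih1 a b hab; have := ih1 a' b' hab'; omega
      · have := ih1 a b hab; omega
      · have := ih1 a b hab; have := ih1 a' b' hab'; omega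
      · have := ih4 a b a' b' hab hab'; omega

/-- Basic properties of the nested interval system `N_ℓ`:
(1) every interval `(i,j) ∈ N_ℓ` satisfies `1 ≤ i < j ≤ h ℓ`;
(2) distinct intervals have pairwise distinct endpoints;
(3) every interval is of the form `(i, i + h a − 1)` with `i ∈ {1,…,h ℓ}` and
`a ∈ {1,…,ℓ}`;
(4) no two intervals cross. -/
theorem statement7 :
    ∀ ℓ : ℕ, 1 ≤ ℓ →
      (∀ i j : ℕ, (i, j) ∈ Nset ℓ → 1 ≤ i ∧ i < j ∧ j ≤ h ℓ) ∧
      (∀ i j i' j' : ℕ, (i, j) ∈ Nset ℓ → (i', j') ∈ Nset ℓ → (i, j) ≠ (i', j') →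
        i ≠ i' ∧ i ≠ j' ∧ j ≠ i' ∧ j ≠ j') ∧
      (∀ i j : ℕ, (i, j) ∈ Nset ℓ →
        ∃ a : ℕ, 1 ≤ a ∧ a ≤ ℓ ∧ 1 ≤ i ∧ i ≤ h ℓ ∧ j = i + h a - 1) ∧
      (∀ i j i' j' : ℕ, (i, j) ∈ Nset ℓ → (i', j') ∈ Nset ℓ →
        ¬ (i < i' ∧ i' < j ∧ j < j')) := by
  intro ℓ hℓ
  obtain ⟨k, rfl⟩ : ∃ k, ℓ = k + 1 := ⟨ℓ - 1, by omega⟩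
  exact Pkey k

end PaperDefs
end

section
/- For every integer ℓ ≥ 1 and every induced path Q of G_ℓ, there is a unique node t of B_ℓ of minimum depth among the nodes whose bag intersects V(Q); that is, there is exactly one node t with π⁻¹(t) ∩ V(Q) ≠ ∅ and depth(t) = min{ depth(t') : t' ∈ V(B_ℓ), π⁻¹(t') ∩ V(Q) ≠ ∅ }. -/
namespace PaperDefs

lemma one_le_pin {p : ℕ} (u : BV p) : 1 ≤ πn u := by
  cases u with
  | inl a => obtain ⟨s, x⟩ := a; exact s.2
  | inr a => obtain ⟨t, x⟩ := a; exact le_trans one_le_two t.2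

/-- Every edge of `G_ℓ` joins two ancestor-comparable nodes. -/
lemma adj_anc {ℓ : ℕ} (C : GChoices ℓ) {u w : BV (h ℓ)} (hadj : (Gl C).Adj u w) :
    anc (πn u) (πn w) ∨ anc (πn w) (πn u) := by
  rw [Gl, SimpleGraph.fromRel_adj] at hadj
  have key : ∀ a b : BV (h ℓ), buRel C.toBUChoices a b ∨ ribRel C a b →
      anc (πn a) (πn b) ∨ anc (πn b) (πn a) := by
    intro a b hab
    rcases hab with hb | hr
    · cases a with
      | inl x =>
        obtain ⟨s, i⟩ := x
        cases b with
        | inl y =>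
          obtain ⟨s', j⟩ := y
          obtain ⟨hs, -⟩ := hb
          left; exact ⟨0, by simp [πn, hs]⟩
        | inr y =>
          obtain ⟨t, j⟩ := y
          rcases hb with ⟨hst, -⟩ | ⟨hst, -⟩
          · left; exact ⟨1, by simpa [πn] using hst.symm⟩
          · left; exact ⟨0, by simp [πn, hst]⟩
      | inr x =>
        obtain ⟨t, i⟩ := x
        cases b with
        | inl y => exact absurd hb (by simp [buRel])
        | inr y =>
          obtain ⟨t', j⟩ := y
          obtain ⟨hs, -⟩ := hb
          left; exact ⟨0, by simp [πn, hs]⟩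
    · cases a with
      | inl x =>
        obtain ⟨s, i⟩ := x
        cases b with
        | inl y => exact absurd hr (by simp [ribRel])
        | inr y =>
          obtain ⟨t, j⟩ := y
          obtain ⟨⟨k, -, hk⟩, -⟩ := hr
          left; exact ⟨k, hk⟩
      | inr x =>
        obtain ⟨t, i⟩ := x
        exact absurd hr (by cases b <;> simp [ribRel])
  rcases hadj.2 with h1 | h1
  · exact key u w h1
  · exact (key w u h1).symm

lemma log_anc {x y k : ℕ} (hk : y / 2 ^ k = x) (hx : 1 ≤ x) :
    Nat.log 2 y = Nat.log 2 x + k := by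
  have hp : 0 < 2 ^ k := pow_pos two_pos _
  apply Nat.log_eq_of_pow_le_of_lt_pow
  · calc 2 ^ (Nat.log 2 x + k) = 2 ^ Nat.log 2 x * 2 ^ k := pow_add 2 _ _
      _ ≤ x * 2 ^ k := Nat.mul_le_mul_right _ (Nat.pow_log_le_self 2 (by omega))
      _ ≤ y := by rw [← hk]; exact Nat.div_mul_le_self y _
  · have h1 : y < (x + 1) * 2 ^ k := by
      rw [← Nat.div_lt_iff_lt_mul hp, hk]; omega
    have h2 : x + 1 ≤ 2 ^ (Nat.log 2 x + 1) :=
      Nat.lt_pow_succ_log_self one_lt_two x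
    calc y < (x + 1) * 2 ^ k := h1
      _ ≤ 2 ^ (Nat.log 2 x + 1) * 2 ^ k := Nat.mul_le_mul_right _ h2
      _ = 2 ^ (Nat.log 2 x + k + 1) := by rw [← pow_add]; ring_nf
      _ ≤ 2 ^ (Nat.log 2 x + k + 1) := le_rfl

/-- The ancestor of `x` at depth `d` (for `d ≤ nodeDepth x`). -/
def projd (d x : ℕ) : ℕ := x / 2 ^ (Nat.log 2 x + 1 - d)

lemma projd_self {d x : ℕ} (hd : Nat.log 2 x + 1 = d) : projd d x = x := by
  unfold projd; rw [hd]; simp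

lemma projd_anc {d x y k : ℕ} (hk : y / 2 ^ k = x) (hx : 1 ≤ x)
    (hd : d ≤ Nat.log 2 x + 1) : projd d x = projd d y := by
  have hlog := log_anc hk hx
  unfold projd
  rw [hlog]
  have he : Nat.log 2 x + k + 1 - d = k + (Nat.log 2 x + 1 - d) := by omega
  rw [he, pow_add, ← Nat.div_div_eq_div_mul, hk]

/-- For every `ℓ ≥ 1` and every (nonempty) induced path `Q` of `G_ℓ`, there is a
unique node `t` of `B_ℓ` of minimum depth among the nodes whose bag intersects
`V(Q)`. -/
theorem statement9 :
    ∀ ℓ : ℕ, 1 ≤ ℓ → ∀ C : GChoices ℓ, ∀ q : ℕ, 1 ≤ q →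
      ∀ v : Fin q → BV (h ℓ), IsInducedPathSeq (Gl C) v →
        ∃! t : ℕ, (∃ i : Fin q, πn (v i) = t) ∧
          ∀ i : Fin q, nodeDepth t ≤ vDepth (v i) := by
  intro ℓ hℓ C q hq v hv
  have hq' : 0 < q := hq
  obtain ⟨i₀, -, hmin⟩ := Finset.exists_min_image Finset.univ (fun i => vDepth (v i))
    ⟨⟨0, hq'⟩, Finset.mem_univ _⟩
  set d := nodeDepth (πn (v i₀)) with hd
  have hdle : ∀ i : Fin q, d ≤ Nat.log 2 (πn (v i)) + 1 := by
    intro i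
    have := hmin i (Finset.mem_univ i)
    exact this
  -- the depth-`d` ancestor is constant along the path
  have hstep : ∀ i j : Fin q, (j : ℕ) = (i : ℕ) + 1 →
      projd d (πn (v i)) = projd d (πn (v j)) := by
    intro i j hij
    have hadj := hv.1.2 i j hij
    rcases adj_anc C hadj with ⟨k, hk⟩ | ⟨k, hk⟩
    · exact projd_anc hk (one_le_pin _) (hdle i)
    · exact (projd_anc hk (one_le_pin _) (hdle j)).symm
  have hconst : ∀ n (hn : n < q),
      projd d (πn (v ⟨n, hn⟩)) = projd d (πn (v ⟨0, hq'⟩)) := by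
    intro n
    induction n with
    | zero => intro hn; rfl
    | succ m ih =>
      intro hn
      have hm : m < q := Nat.lt_of_succ_lt hn
      rw [← hstep ⟨m, hm⟩ ⟨m + 1, hn⟩ rfl]
      exact ih hm
  have hconst' : ∀ i : Fin q, projd d (πn (v i)) = projd d (πn (v ⟨0, hq'⟩)) := by
    intro i
    have := hconst i.1 i.2
    simpa using this
  refine ⟨πn (v i₀), ⟨⟨i₀, rfl⟩, fun i => hmin i (Finset.mem_univ i)⟩, ?_⟩
  rintro t' ⟨⟨j₀, hj₀⟩, hmin'⟩
  -- depths of the two minima agree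
  have h1 : nodeDepth t' ≤ d := by
    have := hmin' i₀
    simpa [vDepth, hd] using this
  have h2 : d ≤ nodeDepth t' := by
    have := hmin j₀ (Finset.mem_univ j₀)
    simpa [vDepth, hd, hj₀] using this
  have hdt' : nodeDepth t' = d := le_antisymm h1 h2
  calc t' = projd d t' := (projd_self (by simpa [nodeDepth] using hdt')).symm
    _ = projd d (πn (v j₀)) := by rw [hj₀]
    _ = projd d (πn (v i₀)) := by rw [hconst' j₀, hconst' i₀]
    _ = πn (v i₀) := projd_self (by simpa [nodeDepth] using hd.symm)

end PaperDefs
end
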